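/- If c : [X]² → κ is a maximal odd-cycle-free colouring into κ (κ infinite), then |X| = 2^κ. -/

import Mathlib

/-!
Since no colour class contains an odd cycle, each colour class `m` is bipartite (a shortest odd
closed walk would be an odd cycle); fix a 2-colouring `C m` of it. The map `x ↦ (m ↦ C m x)` from
`X` to `κ → Fin 2` is injective, because distinct `x` and `y` are adjacent in colour `c x y`. It
is surjective by maximality: a vector `z` outside its range lets one attach a new point to each
`x` in a colour `m` with `C m x ≠ z m`, and putting the new point on side `z m` of every colour
class `m` keeps all classes bipartite.
-/

/-- `c` has a monochromatic odd cycle. -/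
def HasMonoOddCycle {X C : Type*} (c : X → X → C) : Prop :=
  ∃ k : ℕ, 3 ≤ k ∧ Odd k ∧ ∃ x : ZMod k → X, Function.Injective x ∧
    ∃ m : C, ∀ j : ZMod k, c (x j) (x (j + 1)) = m

lemma ZMod.even_of_forall_add_one_ne {k : ℕ} (f : ZMod k → Fin 2)
    (hf : ∀ j, f (j + 1) ≠ f j) : Even k := by
  have hstep : ∀ a b c : Fin 2, a ≠ b → (a = c ↔ ¬ b = c) := by decide
  have hf_nat : ∀ n : ℕ, f n = f 0 ↔ Even n := by
    intro n
    induction n with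
    | zero => simp
    | succ n ih => rw [Nat.cast_succ, hstep _ _ _ (hf n), ih, Nat.even_add_one]
  simpa using hf_nat k

namespace SimpleGraph

variable {V : Type*} {G : SimpleGraph V}

def HasOddCycle (G : SimpleGraph V) : Prop :=
  ∃ k : ℕ, 3 ≤ k ∧ Odd k ∧ ∃ x : ZMod k → V, Function.Injective x ∧
    ∀ j : ZMod k, G.Adj (x j) (x (j + 1))

lemma HasOddCycle.not_colorable_two (h : G.HasOddCycle) : ¬ G.Colorable 2 := by
  rintro ⟨C⟩
  obtain ⟨k, -, hodd, x, -, hadj⟩ := h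
  exact Nat.not_even_iff_odd.2 hodd <|
    ZMod.even_of_forall_add_one_ne (C ∘ x) fun j => (C.valid (hadj j)).symm

lemma Walk.exists_shorter_odd_loop {u : V} (p : G.Walk u u) (hp : Odd p.length) {i j : ℕ}
    (hij : i < j) (hj : j < p.length) (hv : p.getVert i = p.getVert j) :
    ∃ (v : V) (q : G.Walk v v), Odd q.length ∧ q.length < p.length := by
  let a : G.Walk (p.getVert i) (p.getVert i) :=
    ((p.take j).drop i).copy (by rw [take_getVert, min_eq_right hij.le]) hv.symm
  let b : G.Walk (p.getVert i) (p.getVert i) := ((p.drop j).append (p.take i)).copy hv.symm rfl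
  have ha : a.length = j - i := by simp [a, take_length, drop_length, min_eq_left hj.le]
  have hb : b.length = p.length - j + i := by
    simp [b, take_length, drop_length, min_eq_left (hij.trans hj).le]
  -- the two loops split the length of `p`, so one of them is odd
  rcases Nat.even_or_odd (j - i) with heven | hodd
  · refine ⟨_, b, ?_, by omega⟩
    rw [hb]
    rw [Nat.odd_iff] at hp ⊢
    rw [Nat.even_iff] at heven
    omega
  · exact ⟨_, a, ha ▸ hodd, by omega⟩

lemma Walk.exists_odd_loop_injOn_getVert {u : V} (p : G.Walk u u) (hp : Odd p.length) :
    ∃ (v : V) (q : G.Walk v v), Odd q.length ∧ Set.InjOn q.getVert (Set.Iio q.length) := by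
  induction hn : p.length using Nat.strong_induction_on generalizing u with
  | _ n ih =>
    by_cases hinj : Set.InjOn p.getVert (Set.Iio p.length)
    · exact ⟨u, p, hp, hinj⟩
    simp only [Set.InjOn, not_forall] at hinj
    obtain ⟨i, hi, j, hj, hv, hne⟩ := hinj
    obtain ⟨v, q, hq, hlt⟩ : ∃ (v : V) (q : G.Walk v v), Odd q.length ∧ q.length < p.length := by
      rcases lt_or_gt_of_ne hne with hij | hji
      · exact p.exists_shorter_odd_loop hp hij hj hv
      · exact p.exists_shorter_odd_loop hp hji hi hv.symm
    exact ih _ (hn ▸ hlt) q hq rfl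

lemma Walk.hasOddCycle_of_injOn_getVert {u : V} (p : G.Walk u u) (hp : Odd p.length)
    (hinj : Set.InjOn p.getVert (Set.Iio p.length)) : G.HasOddCycle := by
  have hn3 : 3 ≤ p.length := by
    obtain ⟨t, ht⟩ := hp
    rcases Nat.eq_zero_or_pos t with rfl | ht0
    · have hloop := p.adj_getVert_succ (i := 0) (by omega)
      rw [p.getVert_zero, zero_add, show 1 = p.length by omega, p.getVert_length] at hloop
      exact (G.irrefl hloop).elim
    · omega
  have : NeZero p.length := ⟨by omega⟩
  refine ⟨p.length, hn3, hp, fun j => p.getVert j.val,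
    fun a b hab => ZMod.val_injective _ (hinj (ZMod.val_lt a) (ZMod.val_lt b) hab), fun j => ?_⟩
  have hj := ZMod.val_lt j
  change G.Adj (p.getVert j.val) (p.getVert (j + 1).val)
  rw [ZMod.val_add, ZMod.val_one_eq_one_mod, Nat.add_mod_mod]
  have hadj := p.adj_getVert_succ hj
  rcases Nat.lt_or_ge (j.val + 1) p.length with hlt | hge
  · rwa [Nat.mod_eq_of_lt hlt]
  · have hlast : j.val + 1 = p.length := by omega
    rw [hlast, Nat.mod_self, p.getVert_zero]
    rwa [hlast, p.getVert_length] at hadj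

lemma colorable_two_iff_not_hasOddCycle : G.Colorable 2 ↔ ¬ G.HasOddCycle := by
  refine ⟨fun hC h => h.not_colorable_two hC, fun h => ?_⟩
  refine two_colorable_iff_forall_loop_even.2 fun u p => ?_
  by_contra hp
  obtain ⟨v, q, hq, hinj⟩ := p.exists_odd_loop_injOn_getVert (Nat.not_even_iff_odd.1 hp)
  exact h (q.hasOddCycle_of_injOn_getVert hq hinj)

end SimpleGraph

open SimpleGraph

section ColorClass

variable {X κ : Type*}

def colorClass (c : X → X → κ) (m : κ) : SimpleGraph X :=
  SimpleGraph.fromRel fun x y => c x y = m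

lemma hasMonoOddCycle_iff {c : X → X → κ} (hsymm : ∀ x y, c x y = c y x) :
    HasMonoOddCycle c ↔ ∃ m, (colorClass c m).HasOddCycle := by
  constructor
  · rintro ⟨k, hk, hodd, x, hinj, m, hm⟩
    have : Fact (1 < k) := ⟨by omega⟩
    refine ⟨m, k, hk, hodd, x, hinj, fun j => ?_⟩
    exact (fromRel_adj _ _ _).2 ⟨hinj.ne (succ_ne_self j).symm, Or.inl (hm j)⟩
  · rintro ⟨m, k, hk, hodd, x, hinj, hadj⟩
    refine ⟨k, hk, hodd, x, hinj, m, fun j => ?_⟩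
    obtain ⟨-, h | h⟩ := (fromRel_adj _ _ _).1 (hadj j)
    · exact h
    · exact (hsymm _ _).trans h

lemma not_hasMonoOddCycle_iff {c : X → X → κ} (hsymm : ∀ x y, c x y = c y x) :
    ¬ HasMonoOddCycle c ↔ ∀ m, (colorClass c m).Colorable 2 := by
  simp only [hasMonoOddCycle_iff hsymm, colorable_two_iff_not_hasOddCycle, not_exists]

/-- The colour `m₀` of the pair `(none, none)` never matters, since cycles are injective. -/
def extendByPoint (c : X → X → κ) (g : X → κ) (m₀ : κ) : Option X → Option X → κ
  | some x, some y => c x y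
  | some x, none => g x
  | none, some y => g y
  | none, none => m₀

lemma extendByPoint_symm {c : X → X → κ} (hsymm : ∀ x y, c x y = c y x) (g : X → κ) (m₀ : κ) :
    ∀ p q, extendByPoint c g m₀ p q = extendByPoint c g m₀ q p := by
  rintro (_ | x) (_ | y) <;> simp [extendByPoint, hsymm]

/-- The new point goes on side `z m` of the bipartition of colour class `m`. -/
lemma not_hasMonoOddCycle_extendByPoint {c : X → X → κ} (hsymm : ∀ x y, c x y = c y x)
    (C : ∀ m, (colorClass c m).Coloring (Fin 2)) (z : κ → Fin 2) (g : X → κ)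
    (hg : ∀ x, C (g x) x ≠ z (g x)) (m₀ : κ) :
    ¬ HasMonoOddCycle (extendByPoint c g m₀) := by
  refine (not_hasMonoOddCycle_iff (extendByPoint_symm hsymm g m₀)).2 fun m =>
    ⟨Coloring.mk (fun p => p.elim (z m) (C m)) ?_⟩
  rintro (_ | x) (_ | y) hadj <;> simp only [colorClass, extendByPoint, fromRel_adj,
    SimpleGraph.irrefl, ne_eq, reduceCtorEq, not_false_eq_true, or_self, true_and,
    Option.some.injEq] at hadj
  · exact hadj ▸ (hg y).symm
  · exact hadj ▸ hg x
  · exact (C m).valid ((fromRel_adj _ _ _).2 hadj)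

lemma injective_coloring_pi {c : X → X → κ} (C : ∀ m, (colorClass c m).Coloring (Fin 2)) :
    Function.Injective fun x m => C m x := by
  intro x y hxy
  by_contra hne
  exact (C (c x y)).valid ((fromRel_adj _ _ _).2 ⟨hne, Or.inl rfl⟩) (congrFun hxy (c x y))

end ColorClass

/-- If `c : [X]² → κ` (κ infinite) is a maximal odd-cycle-free colouring into `κ`
(it is odd-cycle-free, but every symmetric extension to `[X ∪ {y}]²` for a new point
`y` — modelled by `Option X` with new point `none` — has a monochromatic odd cycle),
then `|X| = 2^κ`. -/
theorem stmt14 {X κ : Type u} [Infinite κ] (c : X → X → κ)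
    (hsymm : ∀ x y, c x y = c y x)
    (hfree : ¬ HasMonoOddCycle c)
    (hmax : ∀ d : Option X → Option X → κ, (∀ p q, d p q = d q p) →
      (∀ x y : X, d (some x) (some y) = c x y) → HasMonoOddCycle d) :
    Cardinal.mk X = 2 ^ Cardinal.mk κ := by
  have hcol := (not_hasMonoOddCycle_iff hsymm).1 hfree
  let C : ∀ m, (colorClass c m).Coloring (Fin 2) := fun m => (hcol m).some
  have hsurj : Function.Surjective fun x m => C m x := by
    intro z
    by_contra hz
    choose g hg using fun x => Function.ne_iff.1 fun h => hz ⟨x, h⟩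
    let m₀ : κ := Classical.arbitrary κ
    exact not_hasMonoOddCycle_extendByPoint hsymm C z g hg m₀
      (hmax _ (extendByPoint_symm hsymm g m₀) fun _ _ => rfl)
  calc Cardinal.mk X = Cardinal.mk (κ → Fin 2) :=
        Cardinal.mk_congr (Equiv.ofBijective _ ⟨injective_coloring_pi C, hsurj⟩)
    _ = 2 ^ Cardinal.mk κ := by simp
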